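/- arXiv:2204.03730 — 3 statements merged into one kernel-verified Lean document; each statement's English description precedes it below -/
import Mathlib

section
/- Let H = (V, N, w, c) be a hypergraph, let Π be a k-way partition of H, and let u, v be two distinct nodes lying in the same block of Π. Let H' be the hypergraph obtained from H by contracting u and v, and let Π' be the partition of H' obtained from Π by deleting v from its block. Then for every hyperedge e of H, the connectivity set of the corresponding hyperedge e' of H' under Π' equals the connectivity set of e under Π; in particular λ_{Π'}(e') = λ_Π(e), and e' is a cut hyperedge of Π' if and only if e is a cut hyperedge of Π. -/
open Finset

/-- A hypergraph `H = (V, N, w, c)`: a finite node set, an indexed family of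
hyperedges each with a nonempty pin set contained in the node set, a
nonnegative node-weight function and a nonnegative hyperedge-cost function. -/
structure PinHypergraph (V E : Type*) [DecidableEq V] [Fintype E] where
  nodes : Finset V
  pins : E → Finset V
  pins_subset : ∀ e, pins e ⊆ nodes
  pins_nonempty : ∀ e, (pins e).Nonempty
  w : V → ℝ
  w_nonneg : ∀ x, 0 ≤ w x
  c : E → ℝ
  c_nonneg : ∀ e, 0 ≤ c e

namespace PinHypergraph

variable {V E : Type*} [DecidableEq V] [Fintype E]

/-- `π` is a `k`-way partition of `H`: every node is assigned one of the `k`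
blocks (blocks are automatically pairwise disjoint with union `V`), and every
block is nonempty. -/
def IsPartition (H : PinHypergraph V E) (k : ℕ) (π : V → Fin k) : Prop :=
  ∀ i : Fin k, ∃ x ∈ H.nodes, π x = i

/-- The connectivity set `Λ(e)` of a hyperedge under a partition: the set of
blocks containing at least one pin of `e`. -/
def connSet (H : PinHypergraph V E) {k : ℕ} (π : V → Fin k) (e : E) : Finset (Fin k) :=
  (H.pins e).image π

/-- The connectivity `λ(e) = |Λ(e)|`. -/
def connectivity (H : PinHypergraph V E) {k : ℕ} (π : V → Fin k) (e : E) : ℕ :=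
  (H.connSet π e).card

/-- A hyperedge is a cut hyperedge if its connectivity exceeds one. -/
def IsCut (H : PinHypergraph V E) {k : ℕ} (π : V → Fin k) (e : E) : Prop :=
  1 < H.connectivity π e

/-- The connectivity metric `(λ − 1)_H(Π) = Σ_e (λ(e) − 1)·c(e)`. -/
def connMetric (H : PinHypergraph V E) {k : ℕ} (π : V → Fin k) : ℝ :=
  ∑ e : E, ((H.connectivity π e : ℝ) - 1) * H.c e

/-- The cut metric `cut_H(Π) = Σ_{e cut} c(e)`. -/
def cutMetric (H : PinHypergraph V E) {k : ℕ} (π : V → Fin k) : ℝ :=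
  ∑ e ∈ Finset.univ.filter (fun e => 1 < H.connectivity π e), H.c e

/-- The weight of block `i` of the partition `π`. -/
def blockWeight (H : PinHypergraph V E) {k : ℕ} (π : V → Fin k) (i : Fin k) : ℝ :=
  ∑ x ∈ H.nodes.filter (fun x => π x = i), H.w x

/-- The total node weight of `H`. -/
def totalWeight (H : PinHypergraph V E) : ℝ :=
  ∑ x ∈ H.nodes, H.w x

/-- `π` is `ε`-balanced: every block weighs at most
`(1+ε)·⌈(Σ_{v∈V} w(v))/k⌉`. -/
def IsBalanced (H : PinHypergraph V E) (ε : ℝ) {k : ℕ} (π : V → Fin k) : Prop :=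
  ∀ i : Fin k, H.blockWeight π i ≤ (1 + ε) * (⌈H.totalWeight / (k : ℝ)⌉ : ℝ)

/-- Contraction of the two nodes `u` and `v` (merging `v` into `u`):
`v` is removed from the node set, `w(u)` becomes `w(u) + w(v)`, and in every
hyperedge containing `v` the pin `v` is replaced by `u`; costs are unchanged. -/
def contract (H : PinHypergraph V E) (u v : V) : PinHypergraph V E where
  nodes := insert u (H.nodes.erase v)
  pins := fun e => if v ∈ H.pins e then insert u ((H.pins e).erase v) else H.pins e
  pins_subset := by
    intro e x hx
    by_cases h : v ∈ H.pins e
    · rw [if_pos h] at hx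
      rcases Finset.mem_insert.mp hx with rfl | hx'
      · exact Finset.mem_insert_self _ _
      · rcases Finset.mem_erase.mp hx' with ⟨hxv, hxp⟩
        exact Finset.mem_insert_of_mem (Finset.mem_erase.mpr ⟨hxv, H.pins_subset e hxp⟩)
    · rw [if_neg h] at hx
      have hxv : x ≠ v := fun hEq => h (hEq ▸ hx)
      exact Finset.mem_insert_of_mem (Finset.mem_erase.mpr ⟨hxv, H.pins_subset e hx⟩)
  pins_nonempty := by
    intro e
    by_cases h : v ∈ H.pins e
    · rw [if_pos h]; exact Finset.insert_nonempty _ _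
    · rw [if_neg h]; exact H.pins_nonempty e
  w := fun x => if x = u then H.w u + H.w v else H.w x
  w_nonneg := by
    intro x
    split
    · exact add_nonneg (H.w_nonneg u) (H.w_nonneg v)
    · exact H.w_nonneg x
  c := H.c
  c_nonneg := H.c_nonneg


/-- Contraction of a whole set `S` of nodes into a single new node `uS`:
the resulting node set is `(V \ S) ∪ {uS}`, the new node weighs
`Σ_{v∈S} w(v)`, and in every hyperedge meeting `S` the pins in `S` are
replaced by `uS`; costs are unchanged. -/
def contractSet (H : PinHypergraph V E) (S : Finset V) (uS : V) : PinHypergraph V E where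
  nodes := insert uS (H.nodes \ S)
  pins := fun e => if (H.pins e ∩ S).Nonempty then insert uS (H.pins e \ S) else H.pins e
  pins_subset := by
    intro e x hx
    by_cases h : (H.pins e ∩ S).Nonempty
    · rw [if_pos h] at hx
      rcases Finset.mem_insert.mp hx with rfl | hx'
      · exact Finset.mem_insert_self _ _
      · rcases Finset.mem_sdiff.mp hx' with ⟨hxp, hxS⟩
        exact Finset.mem_insert_of_mem (Finset.mem_sdiff.mpr ⟨H.pins_subset e hxp, hxS⟩)
    · rw [if_neg h] at hx
      have hxS : x ∉ S := fun hmem =>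
        h ⟨x, Finset.mem_inter.mpr ⟨hx, hmem⟩⟩
      exact Finset.mem_insert_of_mem (Finset.mem_sdiff.mpr ⟨H.pins_subset e hx, hxS⟩)
  pins_nonempty := by
    intro e
    by_cases h : (H.pins e ∩ S).Nonempty
    · rw [if_pos h]; exact Finset.insert_nonempty _ _
    · rw [if_neg h]; exact H.pins_nonempty e
  w := fun x => if x = uS then ∑ y ∈ S, H.w y else H.w x
  w_nonneg := by
    intro x
    split
    · exact Finset.sum_nonneg fun y _ => H.w_nonneg y
    · exact H.w_nonneg x
  c := H.c
  c_nonneg := H.c_nonneg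

end PinHypergraph

theorem Finset.image_insert_erase_of_apply_eq {α β : Type*} [DecidableEq α] [DecidableEq β]
    {f : α → β} {s : Finset α} {u v : α} (hv : v ∈ s) (h : f u = f v) :
    (insert u (s.erase v)).image f = s.image f := by
  rw [image_insert, h, ← image_insert, insert_erase hv]

namespace PinHypergraph

variable {V E : Type*} [DecidableEq V] [Fintype E]

theorem connSet_contract_of_apply_eq (H : PinHypergraph V E) {k : ℕ} {π : V → Fin k}
    {u v : V} (hsame : π u = π v) (e : E) :
    (H.contract u v).connSet π e = H.connSet π e := by
  unfold connSet contract
  dsimp only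
  split_ifs with hv
  exacts [image_insert_erase_of_apply_eq hv hsame, rfl]

end PinHypergraph

theorem connSet_contract_eq_general {V E : Type*} [DecidableEq V] [Fintype E]
    (H : PinHypergraph V E) (k : ℕ) (π : V → Fin k)
    (u v : V)
    (hsame : π u = π v) :
    ∀ e : E,
      (H.contract u v).connSet π e = H.connSet π e ∧
      (H.contract u v).connectivity π e = H.connectivity π e ∧
      ((H.contract u v).IsCut π e ↔ H.IsCut π e) := by
  intro e
  have hconn := H.connSet_contract_of_apply_eq hsame e
  have hcard : (H.contract u v).connectivity π e = H.connectivity π e :=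
    congrArg Finset.card hconn
  exact ⟨hconn, hcard, by rw [PinHypergraph.IsCut, hcard, PinHypergraph.IsCut]⟩

/-- Contracting two distinct nodes `u, v` lying in the same block
of a `k`-way partition `Π` leaves, for every hyperedge, the connectivity set
(hence the connectivity, hence being a cut hyperedge) unchanged, where the
partition of the contracted hypergraph is `Π` with `v` deleted from its block
(the block assignment of the remaining nodes is unchanged, i.e. `π` itself). -/
theorem connSet_contract_eq {V E : Type*} [DecidableEq V] [Fintype E]
    (H : PinHypergraph V E) (k : ℕ) (π : V → Fin k)
    (hπ : H.IsPartition k π)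
    (u v : V) (hu : u ∈ H.nodes) (hv : v ∈ H.nodes) (huv : u ≠ v)
    (hsame : π u = π v) :
    ∀ e : E,
      (H.contract u v).connSet π e = H.connSet π e ∧
      (H.contract u v).connectivity π e = H.connectivity π e ∧
      ((H.contract u v).IsCut π e ↔ H.IsCut π e) :=
  connSet_contract_eq_general H k π u v hsame
end

section
/- Let H = (V, N, w, c) be a hypergraph, let ε ≥ 0, let Π be an ε-balanced k-way partition of H, and let u, v be two distinct nodes lying in the same block of Π. Let H' be the hypergraph obtained from H by contracting u and v, and let Π' be the partition of H' obtained from Π by deleting v from its block. Then Π' is an ε-balanced k-way partition of H', and moreover (λ − 1)_{H'}(Π') = (λ − 1)_H(Π) and cut_{H'}(Π') = cut_H(Π). -/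
open Finset

/-- A hypergraph `H = (V, N, w, c)`: a finite node set, an indexed family of
hyperedges each with a nonempty pin set contained in the node set, a
nonnegative node-weight function and a nonnegative hyperedge-cost function. -/
structure HGraph (V E : Type*) [DecidableEq V] [Fintype E] where
  nodes : Finset V
  pins : E → Finset V
  pins_subset : ∀ e, pins e ⊆ nodes
  pins_nonempty : ∀ e, (pins e).Nonempty
  w : V → ℝ
  w_nonneg : ∀ x, 0 ≤ w x
  c : E → ℝ
  c_nonneg : ∀ e, 0 ≤ c e

namespace HGraph

variable {V E : Type*} [DecidableEq V] [Fintype E]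

/-- `π` is a `k`-way partition of `H`: every node is assigned one of the `k`
blocks (blocks are automatically pairwise disjoint with union `V`), and every
block is nonempty. -/
def IsPartition (H : HGraph V E) (k : ℕ) (π : V → Fin k) : Prop :=
  ∀ i : Fin k, ∃ x ∈ H.nodes, π x = i

/-- The connectivity set `Λ(e)` of a hyperedge under a partition: the set of
blocks containing at least one pin of `e`. -/
def connSet (H : HGraph V E) {k : ℕ} (π : V → Fin k) (e : E) : Finset (Fin k) :=
  (H.pins e).image π

/-- The connectivity `λ(e) = |Λ(e)|`. -/
def connectivity (H : HGraph V E) {k : ℕ} (π : V → Fin k) (e : E) : ℕ :=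
  (H.connSet π e).card

/-- A hyperedge is a cut hyperedge if its connectivity exceeds one. -/
def IsCut (H : HGraph V E) {k : ℕ} (π : V → Fin k) (e : E) : Prop :=
  1 < H.connectivity π e

/-- The connectivity metric `(λ − 1)_H(Π) = Σ_e (λ(e) − 1)·c(e)`. -/
def connMetric (H : HGraph V E) {k : ℕ} (π : V → Fin k) : ℝ :=
  ∑ e : E, ((H.connectivity π e : ℝ) - 1) * H.c e

/-- The cut metric `cut_H(Π) = Σ_{e cut} c(e)`. -/
def cutMetric (H : HGraph V E) {k : ℕ} (π : V → Fin k) : ℝ :=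
  ∑ e ∈ Finset.univ.filter (fun e => 1 < H.connectivity π e), H.c e

/-- The weight of block `i` of the partition `π`. -/
def blockWeight (H : HGraph V E) {k : ℕ} (π : V → Fin k) (i : Fin k) : ℝ :=
  ∑ x ∈ H.nodes.filter (fun x => π x = i), H.w x

/-- The total node weight of `H`. -/
def totalWeight (H : HGraph V E) : ℝ :=
  ∑ x ∈ H.nodes, H.w x

/-- `π` is `ε`-balanced: every block weighs at most
`(1+ε)·⌈(Σ_{v∈V} w(v))/k⌉`. -/
def IsBalanced (H : HGraph V E) (ε : ℝ) {k : ℕ} (π : V → Fin k) : Prop :=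
  ∀ i : Fin k, H.blockWeight π i ≤ (1 + ε) * (⌈H.totalWeight / (k : ℝ)⌉ : ℝ)

/-- Contraction of the two nodes `u` and `v` (merging `v` into `u`):
`v` is removed from the node set, `w(u)` becomes `w(u) + w(v)`, and in every
hyperedge containing `v` the pin `v` is replaced by `u`; costs are unchanged. -/
def contract (H : HGraph V E) (u v : V) : HGraph V E where
  nodes := insert u (H.nodes.erase v)
  pins := fun e => if v ∈ H.pins e then insert u ((H.pins e).erase v) else H.pins e
  pins_subset := by
    intro e x hx
    try dsimp only at hx
    by_cases h : v ∈ H.pins e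
    · rw [if_pos h] at hx
      rcases Finset.mem_insert.mp hx with rfl | hx'
      · exact Finset.mem_insert_self _ _
      · rcases Finset.mem_erase.mp hx' with ⟨hxv, hxp⟩
        exact Finset.mem_insert_of_mem (Finset.mem_erase.mpr ⟨hxv, H.pins_subset e hxp⟩)
    · rw [if_neg h] at hx
      have hxv : x ≠ v := fun hEq => h (hEq ▸ hx)
      exact Finset.mem_insert_of_mem (Finset.mem_erase.mpr ⟨hxv, H.pins_subset e hx⟩)
  pins_nonempty := by
    intro e
    try dsimp only
    by_cases h : v ∈ H.pins e
    · rw [if_pos h]; exact Finset.insert_nonempty _ _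
    · rw [if_neg h]; exact H.pins_nonempty e
  w := fun x => if x = u then H.w u + H.w v else H.w x
  w_nonneg := by
    intro x
    try dsimp only
    split
    · exact add_nonneg (H.w_nonneg u) (H.w_nonneg v)
    · exact H.w_nonneg x
  c := H.c
  c_nonneg := H.c_nonneg


/-- Contraction of a whole set `S` of nodes into a single new node `uS`:
the resulting node set is `(V \ S) ∪ {uS}`, the new node weighs
`Σ_{v∈S} w(v)`, and in every hyperedge meeting `S` the pins in `S` are
replaced by `uS`; costs are unchanged. -/
def contractSet (H : HGraph V E) (S : Finset V) (uS : V) : HGraph V E where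
  nodes := insert uS (H.nodes \ S)
  pins := fun e => if (H.pins e ∩ S).Nonempty then insert uS (H.pins e \ S) else H.pins e
  pins_subset := by
    intro e x hx
    try dsimp only at hx
    by_cases h : (H.pins e ∩ S).Nonempty
    · rw [if_pos h] at hx
      rcases Finset.mem_insert.mp hx with rfl | hx'
      · exact Finset.mem_insert_self _ _
      · rcases Finset.mem_sdiff.mp hx' with ⟨hxp, hxS⟩
        exact Finset.mem_insert_of_mem (Finset.mem_sdiff.mpr ⟨H.pins_subset e hxp, hxS⟩)
    · rw [if_neg h] at hx
      have hxS : x ∉ S := fun hmem =>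
        h ⟨x, Finset.mem_inter.mpr ⟨hx, hmem⟩⟩
      exact Finset.mem_insert_of_mem (Finset.mem_sdiff.mpr ⟨H.pins_subset e hx, hxS⟩)
  pins_nonempty := by
    intro e
    try dsimp only
    by_cases h : (H.pins e ∩ S).Nonempty
    · rw [if_pos h]; exact Finset.insert_nonempty _ _
    · rw [if_neg h]; exact H.pins_nonempty e
  w := fun x => if x = uS then ∑ y ∈ S, H.w y else H.w x
  w_nonneg := by
    intro x
    try dsimp only
    split
    · exact Finset.sum_nonneg fun y _ => H.w_nonneg y
    · exact H.w_nonneg x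
  c := H.c
  c_nonneg := H.c_nonneg

end HGraph

/-! Since `u` and `v` lie in the same block, replacing the pin `v` by `u` leaves the set of blocks
met by every hyperedge unchanged, so connectivities and both metrics are preserved. The weight of
`v` moves to `u` inside that same block, so neither the block weights nor the total weight change,
and `u` still witnesses that the block of `v` is nonempty. -/

namespace HGraph

variable {V E : Type*} [DecidableEq V] [Fintype E] (H : HGraph V E) {u v : V}

theorem contract_nodes_of_mem (hu : u ∈ H.nodes) (huv : u ≠ v) :
    (H.contract u v).nodes = H.nodes.erase v :=
  insert_eq_self.mpr (mem_erase.mpr ⟨huv, hu⟩)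

theorem contract_w_apply (x : V) :
    (H.contract u v).w x = H.w x + if x = u then H.w v else 0 := by
  by_cases hx : x = u
  · subst hx; simp [contract]
  · simp [contract, hx]

theorem sum_contract_w_of_notMem {s : Finset V} (hu : u ∉ s) :
    ∑ x ∈ s, (H.contract u v).w x = ∑ x ∈ s, H.w x :=
  sum_congr rfl fun x hx => by
    rw [contract_w_apply, if_neg (ne_of_mem_of_not_mem hx hu), add_zero]

theorem sum_erase_contract_w {s : Finset V} (hu : u ∈ s) (hv : v ∈ s) (huv : u ≠ v) :
    ∑ x ∈ s.erase v, (H.contract u v).w x = ∑ x ∈ s, H.w x := by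
  simp only [contract_w_apply, sum_add_distrib, sum_ite_eq', mem_erase, if_pos (And.intro huv hu)]
  exact sum_erase_add s H.w hv

theorem totalWeight_contract (hu : u ∈ H.nodes) (hv : v ∈ H.nodes) (huv : u ≠ v) :
    (H.contract u v).totalWeight = H.totalWeight := by
  rw [totalWeight, contract_nodes_of_mem H hu huv, sum_erase_contract_w H hu hv huv, totalWeight]

theorem blockWeight_contract {k : ℕ} (π : V → Fin k) (hu : u ∈ H.nodes) (hv : v ∈ H.nodes)
    (huv : u ≠ v) (hsame : π u = π v) (i : Fin k) :
    (H.contract u v).blockWeight π i = H.blockWeight π i := by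
  rw [blockWeight, contract_nodes_of_mem H hu huv, filter_erase, blockWeight]
  by_cases hi : π u = i
  · exact sum_erase_contract_w H (mem_filter.mpr ⟨hu, hi⟩) (mem_filter.mpr ⟨hv, hsame ▸ hi⟩) huv
  · have hv' : v ∉ H.nodes.filter (fun x => π x = i) := fun h => hi (hsame ▸ (mem_filter.mp h).2)
    rw [erase_eq_of_notMem hv']
    exact sum_contract_w_of_notMem H fun h => hi (mem_filter.mp h).2

theorem isPartition_contract {k : ℕ} {π : V → Fin k} (hπ : H.IsPartition k π)
    (hsame : π u = π v) : (H.contract u v).IsPartition k π := by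
  intro i
  obtain ⟨x, hx, rfl⟩ := hπ i
  by_cases hxv : x = v
  · exact ⟨u, mem_insert_self _ _, hxv ▸ hsame⟩
  · exact ⟨x, mem_insert_of_mem (mem_erase.mpr ⟨hxv, hx⟩), rfl⟩

theorem isBalanced_contract {ε : ℝ} {k : ℕ} {π : V → Fin k} (hbal : H.IsBalanced ε π)
    (hu : u ∈ H.nodes) (hv : v ∈ H.nodes) (huv : u ≠ v) (hsame : π u = π v) :
    (H.contract u v).IsBalanced ε π := fun i => by
  rw [blockWeight_contract H π hu hv huv hsame, totalWeight_contract H hu hv huv]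
  exact hbal i

theorem connSet_contract {k : ℕ} (π : V → Fin k) (hsame : π u = π v) (e : E) :
    (H.contract u v).connSet π e = H.connSet π e := by
  by_cases h : v ∈ H.pins e
  · conv_rhs => rw [connSet, ← insert_erase h, image_insert, ← hsame]
    simp only [connSet, contract, if_pos h, image_insert]
  · simp only [connSet, contract, if_neg h]

theorem connectivity_contract {k : ℕ} (π : V → Fin k) (hsame : π u = π v) :
    (H.contract u v).connectivity π = H.connectivity π :=
  funext fun e => congrArg card (H.connSet_contract π hsame e)

theorem connMetric_contract {k : ℕ} (π : V → Fin k) (hsame : π u = π v) :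
    (H.contract u v).connMetric π = H.connMetric π := by
  simp only [connMetric, connectivity_contract H π hsame]
  rfl

theorem cutMetric_contract {k : ℕ} (π : V → Fin k) (hsame : π u = π v) :
    (H.contract u v).cutMetric π = H.cutMetric π := by
  simp only [cutMetric, connectivity_contract H π hsame]
  rfl

end HGraph

theorem contract_partition_balanced_and_metrics_general {V E : Type*} [DecidableEq V] [Fintype E]
    (H : HGraph V E) (ε : ℝ) (k : ℕ) (π : V → Fin k)
    (hπ : H.IsPartition k π) (hbal : H.IsBalanced ε π)
    (u v : V) (hu : u ∈ H.nodes) (hv : v ∈ H.nodes) (huv : u ≠ v)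
    (hsame : π u = π v) :
    (H.contract u v).IsPartition k π ∧
    (H.contract u v).IsBalanced ε π ∧
    (H.contract u v).connMetric π = H.connMetric π ∧
    (H.contract u v).cutMetric π = H.cutMetric π :=
  ⟨H.isPartition_contract hπ hsame, H.isBalanced_contract hbal hu hv huv hsame,
    H.connMetric_contract π hsame, H.cutMetric_contract π hsame⟩

/-- If `Π` is an `ε`-balanced `k`-way partition of `H` and `u, v`
are distinct nodes in the same block of `Π`, then after contracting `u` and
`v`, the partition obtained from `Π` by deleting `v` from its block (the block
assignment of the remaining nodes is unchanged, i.e. `π` itself) is an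
`ε`-balanced `k`-way partition of the contracted hypergraph with the same
connectivity-metric and cut-metric values. -/
theorem contract_partition_balanced_and_metrics {V E : Type*} [DecidableEq V] [Fintype E]
    (H : HGraph V E) (ε : ℝ) (hε : 0 ≤ ε) (k : ℕ) (π : V → Fin k)
    (hπ : H.IsPartition k π) (hbal : H.IsBalanced ε π)
    (u v : V) (hu : u ∈ H.nodes) (hv : v ∈ H.nodes) (huv : u ≠ v)
    (hsame : π u = π v) :
    (H.contract u v).IsPartition k π ∧
    (H.contract u v).IsBalanced ε π ∧
    (H.contract u v).connMetric π = H.connMetric π ∧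
    (H.contract u v).cutMetric π = H.cutMetric π :=
  contract_partition_balanced_and_metrics_general H ε k π hπ hbal u v hu hv huv hsame
end

section
/- Let H = (V, N, w, c) be a hypergraph, let ε ≥ 0, let u, v be two distinct nodes of H, and let H' be the hypergraph obtained from H by contracting u and v. For every ε-balanced k-way partition Π* of H', the partition Π̃ of H obtained from Π* by placing v into the block containing u (and keeping all other node assignments unchanged) is an ε-balanced k-way partition of H, and moreover (λ − 1)_H(Π̃) = (λ − 1)_{H'}(Π*) and cut_H(Π̃) = cut_{H'}(Π*). -/
open Finset

/-- A hypergraph `H = (V, N, w, c)`: a finite node set, an indexed family of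
hyperedges each with a nonempty pin set contained in the node set, a
nonnegative node-weight function and a nonnegative hyperedge-cost function. -/
structure WHypergraph (V E : Type*) [DecidableEq V] [Fintype E] where
  nodes : Finset V
  pins : E → Finset V
  pins_subset : ∀ e, pins e ⊆ nodes
  pins_nonempty : ∀ e, (pins e).Nonempty
  w : V → ℝ
  w_nonneg : ∀ x, 0 ≤ w x
  c : E → ℝ
  c_nonneg : ∀ e, 0 ≤ c e

namespace WHypergraph

variable {V E : Type*} [DecidableEq V] [Fintype E]

/-- `π` is a `k`-way partition of `H`: every node is assigned one of the `k`
blocks (blocks are automatically pairwise disjoint with union `V`), and every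
block is nonempty. -/
def IsPartition (H : WHypergraph V E) (k : ℕ) (π : V → Fin k) : Prop :=
  ∀ i : Fin k, ∃ x ∈ H.nodes, π x = i

/-- The connectivity set `Λ(e)` of a hyperedge under a partition: the set of
blocks containing at least one pin of `e`. -/
def connSet (H : WHypergraph V E) {k : ℕ} (π : V → Fin k) (e : E) : Finset (Fin k) :=
  (H.pins e).image π

/-- The connectivity `λ(e) = |Λ(e)|`. -/
def connectivity (H : WHypergraph V E) {k : ℕ} (π : V → Fin k) (e : E) : ℕ :=
  (H.connSet π e).card

/-- A hyperedge is a cut hyperedge if its connectivity exceeds one. -/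
def IsCut (H : WHypergraph V E) {k : ℕ} (π : V → Fin k) (e : E) : Prop :=
  1 < H.connectivity π e

/-- The connectivity metric `(λ − 1)_H(Π) = Σ_e (λ(e) − 1)·c(e)`. -/
def connMetric (H : WHypergraph V E) {k : ℕ} (π : V → Fin k) : ℝ :=
  ∑ e : E, ((H.connectivity π e : ℝ) - 1) * H.c e

/-- The cut metric `cut_H(Π) = Σ_{e cut} c(e)`. -/
def cutMetric (H : WHypergraph V E) {k : ℕ} (π : V → Fin k) : ℝ :=
  ∑ e ∈ Finset.univ.filter (fun e => 1 < H.connectivity π e), H.c e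

/-- The weight of block `i` of the partition `π`. -/
def blockWeight (H : WHypergraph V E) {k : ℕ} (π : V → Fin k) (i : Fin k) : ℝ :=
  ∑ x ∈ H.nodes.filter (fun x => π x = i), H.w x

/-- The total node weight of `H`. -/
def totalWeight (H : WHypergraph V E) : ℝ :=
  ∑ x ∈ H.nodes, H.w x

/-- `π` is `ε`-balanced: every block weighs at most
`(1+ε)·⌈(Σ_{v∈V} w(v))/k⌉`. -/
def IsBalanced (H : WHypergraph V E) (ε : ℝ) {k : ℕ} (π : V → Fin k) : Prop :=
  ∀ i : Fin k, H.blockWeight π i ≤ (1 + ε) * (⌈H.totalWeight / (k : ℝ)⌉ : ℝ)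

/-- Contraction of the two nodes `u` and `v` (merging `v` into `u`):
`v` is removed from the node set, `w(u)` becomes `w(u) + w(v)`, and in every
hyperedge containing `v` the pin `v` is replaced by `u`; costs are unchanged. -/
def contract (H : WHypergraph V E) (u v : V) : WHypergraph V E where
  nodes := insert u (H.nodes.erase v)
  pins := fun e => if v ∈ H.pins e then insert u ((H.pins e).erase v) else H.pins e
  pins_subset := by
    intro e x hx
    try dsimp only at hx
    by_cases h : v ∈ H.pins e
    · rw [if_pos h] at hx
      rcases Finset.mem_insert.mp hx with rfl | hx'
      · exact Finset.mem_insert_self _ _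
      · rcases Finset.mem_erase.mp hx' with ⟨hxv, hxp⟩
        exact Finset.mem_insert_of_mem (Finset.mem_erase.mpr ⟨hxv, H.pins_subset e hxp⟩)
    · rw [if_neg h] at hx
      have hxv : x ≠ v := fun hEq => h (hEq ▸ hx)
      exact Finset.mem_insert_of_mem (Finset.mem_erase.mpr ⟨hxv, H.pins_subset e hx⟩)
  pins_nonempty := by
    intro e
    try dsimp only
    by_cases h : v ∈ H.pins e
    · rw [if_pos h]; exact Finset.insert_nonempty _ _
    · rw [if_neg h]; exact H.pins_nonempty e
  w := fun x => if x = u then H.w u + H.w v else H.w x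
  w_nonneg := by
    intro x
    try dsimp only
    split
    · exact add_nonneg (H.w_nonneg u) (H.w_nonneg v)
    · exact H.w_nonneg x
  c := H.c
  c_nonneg := H.c_nonneg


/-- Contraction of a whole set `S` of nodes into a single new node `uS`:
the resulting node set is `(V \ S) ∪ {uS}`, the new node weighs
`Σ_{v∈S} w(v)`, and in every hyperedge meeting `S` the pins in `S` are
replaced by `uS`; costs are unchanged. -/
def contractSet (H : WHypergraph V E) (S : Finset V) (uS : V) : WHypergraph V E where
  nodes := insert uS (H.nodes \ S)
  pins := fun e => if (H.pins e ∩ S).Nonempty then insert uS (H.pins e \ S) else H.pins e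
  pins_subset := by
    intro e x hx
    try dsimp only at hx
    by_cases h : (H.pins e ∩ S).Nonempty
    · rw [if_pos h] at hx
      rcases Finset.mem_insert.mp hx with rfl | hx'
      · exact Finset.mem_insert_self _ _
      · rcases Finset.mem_sdiff.mp hx' with ⟨hxp, hxS⟩
        exact Finset.mem_insert_of_mem (Finset.mem_sdiff.mpr ⟨H.pins_subset e hxp, hxS⟩)
    · rw [if_neg h] at hx
      have hxS : x ∉ S := fun hmem =>
        h ⟨x, Finset.mem_inter.mpr ⟨hx, hmem⟩⟩
      exact Finset.mem_insert_of_mem (Finset.mem_sdiff.mpr ⟨H.pins_subset e hx, hxS⟩)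
  pins_nonempty := by
    intro e
    try dsimp only
    by_cases h : (H.pins e ∩ S).Nonempty
    · rw [if_pos h]; exact Finset.insert_nonempty _ _
    · rw [if_neg h]; exact H.pins_nonempty e
  w := fun x => if x = uS then ∑ y ∈ S, H.w y else H.w x
  w_nonneg := by
    intro x
    try dsimp only
    split
    · exact Finset.sum_nonneg fun y _ => H.w_nonneg y
    · exact H.w_nonneg x
  c := H.c
  c_nonneg := H.c_nonneg

end WHypergraph

/-! Putting `v` into the block of `u` makes the two nodes indistinguishable at the level of
blocks. Hence every pin set has the same image under the projected partition as its contracted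
pin set, so connectivities (and both metrics) agree; and since the weight of `v` was moved onto
`u`, which lies in the same block, every block weight and the total weight are unchanged. -/

namespace WHypergraph

def uncontract {V α : Type*} [DecidableEq V] (u v : V) (f : V → α) : V → α :=
  fun x => if x = v then f u else f x

section

variable {V E : Type*} [DecidableEq V] [Fintype E] {u v : V}

@[simp]
lemma uncontract_self {α : Type*} (f : V → α) : uncontract u v f v = f u :=
  if_pos rfl

lemma uncontract_of_ne {α : Type*} (f : V → α) {x : V} (hx : x ≠ v) :
    uncontract u v f x = f x :=
  if_neg hx

lemma comp_uncontract {α β : Type*} (g : α → β) (f : V → α) :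
    g ∘ uncontract u v f = uncontract u v (g ∘ f) := by
  funext x
  by_cases hx : x = v <;> simp [uncontract, hx]

variable (H : WHypergraph V E)

lemma contract_nodes_of_mem (hu : u ∈ H.nodes) (huv : u ≠ v) :
    (H.contract u v).nodes = H.nodes.erase v :=
  insert_eq_of_mem (mem_erase.mpr ⟨huv, hu⟩)

lemma contract_w (x : V) : (H.contract u v).w x = H.w x + if x = u then H.w v else 0 := by
  by_cases hx : x = u
  · subst hx; simp [contract]
  · simp [contract, hx]

lemma sum_contract_mul_w (hu : u ∈ H.nodes) (hv : v ∈ H.nodes) (huv : u ≠ v) (g : V → ℝ) :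
    ∑ x ∈ (H.contract u v).nodes, g x * (H.contract u v).w x =
      ∑ x ∈ H.nodes, uncontract u v g x * H.w x := by
  have hu' : u ∈ H.nodes.erase v := mem_erase.mpr ⟨huv, hu⟩
  rw [contract_nodes_of_mem H hu huv, ← add_sum_erase _ _ hv, uncontract_self]
  simp only [contract_w, mul_add, mul_ite, mul_zero, sum_add_distrib, sum_ite_eq', if_pos hu']
  rw [add_comm]
  congr 1
  exact sum_congr rfl fun x hx => by rw [uncontract_of_ne g (ne_of_mem_erase hx)]

lemma blockWeight_eq_sum {k : ℕ} (π : V → Fin k) (i : Fin k) :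
    H.blockWeight π i =
      ∑ x ∈ H.nodes, ((fun j => if j = i then (1 : ℝ) else 0) ∘ π) x * H.w x := by
  simp [blockWeight, sum_filter]

lemma blockWeight_uncontract (hu : u ∈ H.nodes) (hv : v ∈ H.nodes) (huv : u ≠ v) {k : ℕ}
    (π : V → Fin k) (i : Fin k) :
    H.blockWeight (uncontract u v π) i = (H.contract u v).blockWeight π i := by
  rw [blockWeight_eq_sum, blockWeight_eq_sum, sum_contract_mul_w H hu hv huv, comp_uncontract]

lemma totalWeight_contract (hu : u ∈ H.nodes) (hv : v ∈ H.nodes) (huv : u ≠ v) :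
    (H.contract u v).totalWeight = H.totalWeight := by
  simpa [totalWeight, uncontract] using sum_contract_mul_w H hu hv huv (fun _ => 1)

lemma connSet_uncontract {k : ℕ} (π : V → Fin k) (e : E) :
    H.connSet (uncontract u v π) e = (H.contract u v).connSet π e := by
  by_cases hve : v ∈ H.pins e
  · have hpins : (H.contract u v).pins e = insert u ((H.pins e).erase v) := if_pos hve
    calc (H.pins e).image (uncontract u v π)
        = (insert v ((H.pins e).erase v)).image (uncontract u v π) := by rw [insert_erase hve]
      _ = insert (π u) (((H.pins e).erase v).image π) := by
        rw [image_insert, uncontract_self,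
          image_congr fun x hx => uncontract_of_ne π (ne_of_mem_erase hx)]
      _ = ((H.contract u v).pins e).image π := by rw [hpins, image_insert]
  · simp only [connSet, contract, if_neg hve]
    exact image_congr fun x hx => uncontract_of_ne π (ne_of_mem_of_not_mem hx hve)

lemma connectivity_uncontract {k : ℕ} (π : V → Fin k) (e : E) :
    H.connectivity (uncontract u v π) e = (H.contract u v).connectivity π e := by
  rw [connectivity, connSet_uncontract]
  rfl

lemma connMetric_uncontract {k : ℕ} (π : V → Fin k) :
    H.connMetric (uncontract u v π) = (H.contract u v).connMetric π := by
  simp only [connMetric, connectivity_uncontract]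
  rfl

lemma cutMetric_uncontract {k : ℕ} (π : V → Fin k) :
    H.cutMetric (uncontract u v π) = (H.contract u v).cutMetric π := by
  simp only [cutMetric, connectivity_uncontract]
  rfl

lemma IsPartition.uncontract (hu : u ∈ H.nodes) (huv : u ≠ v) {k : ℕ} {π : V → Fin k}
    (hπ : (H.contract u v).IsPartition k π) : H.IsPartition k (uncontract u v π) := by
  intro i
  obtain ⟨x, hx, rfl⟩ := hπ i
  rw [contract_nodes_of_mem H hu huv] at hx
  exact ⟨x, mem_of_mem_erase hx, uncontract_of_ne π (ne_of_mem_erase hx)⟩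

lemma IsBalanced.uncontract (hu : u ∈ H.nodes) (hv : v ∈ H.nodes) (huv : u ≠ v) {ε : ℝ}
    {k : ℕ} {π : V → Fin k} (hπ : (H.contract u v).IsBalanced ε π) :
    H.IsBalanced ε (uncontract u v π) := by
  intro i
  rw [blockWeight_uncontract H hu hv huv, ← totalWeight_contract H hu hv huv]
  exact hπ i

end

end WHypergraph

theorem uncontract_partition_balanced_and_metrics_general {V E : Type*} [DecidableEq V] [Fintype E]
    (H : WHypergraph V E) (ε : ℝ) (k : ℕ)
    (u v : V) (hu : u ∈ H.nodes) (hv : v ∈ H.nodes) (huv : u ≠ v)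
    (πs : V → Fin k)
    (hπs : (H.contract u v).IsPartition k πs)
    (hbal : (H.contract u v).IsBalanced ε πs) :
    H.IsPartition k (fun x => if x = v then πs u else πs x) ∧
    H.IsBalanced ε (fun x => if x = v then πs u else πs x) ∧
    H.connMetric (fun x => if x = v then πs u else πs x) = (H.contract u v).connMetric πs ∧
    H.cutMetric (fun x => if x = v then πs u else πs x) = (H.contract u v).cutMetric πs :=
  ⟨hπs.uncontract H hu huv, hbal.uncontract H hu hv huv, H.connMetric_uncontract πs,
    H.cutMetric_uncontract πs⟩

/-- If `Π*` is an `ε`-balanced `k`-way partition of the hypergraph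
obtained from `H` by contracting distinct nodes `u` and `v`, then the partition
of `H` obtained from `Π*` by placing `v` into the block of `u` (keeping all
other assignments) is an `ε`-balanced `k`-way partition of `H` with the same
connectivity-metric and cut-metric values. -/
theorem uncontract_partition_balanced_and_metrics {V E : Type*} [DecidableEq V] [Fintype E]
    (H : WHypergraph V E) (ε : ℝ) (hε : 0 ≤ ε) (k : ℕ)
    (u v : V) (hu : u ∈ H.nodes) (hv : v ∈ H.nodes) (huv : u ≠ v)
    (πs : V → Fin k)
    (hπs : (H.contract u v).IsPartition k πs)
    (hbal : (H.contract u v).IsBalanced ε πs) :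
    H.IsPartition k (fun x => if x = v then πs u else πs x) ∧
    H.IsBalanced ε (fun x => if x = v then πs u else πs x) ∧
    H.connMetric (fun x => if x = v then πs u else πs x) = (H.contract u v).connMetric πs ∧
    H.cutMetric (fun x => if x = v then πs u else πs x) = (H.contract u v).cutMetric πs :=
  uncontract_partition_balanced_and_metrics_general H ε k u v hu hv huv πs hπs hbal
end
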